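/- Let $A$ be a symmetric real matrix, $\Delta$ the standard simplex, $f(x) = \frac{1}{2}x^T A x$. Suppose $x$ lies in the relative interior of $\Delta$ and maximizes $f$ over $\Delta$, and suppose $x' \in \Delta$, $x' \neq x$, also satisfies $f(x') = f(x)$. Then $f$ is constant on the line through $x$ and $x'$: for all $t \in \mathbb{R}$ with $(1-t)x + tx' \in \Delta$, $f((1-t)x + tx') = f(x)$. -/

import Mathlib

/-! Along the line `s ↦ x + s • (x' - x)` the form is the quadratic `f x + s c + s² q`, and
`f x' = f x` gives `c = -q`, so `f (x + s • (x' - x)) - f x = q s (s - 1)`. This is `≤ 0` at every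
point of the simplex, in particular at `s = 1/2` (so `q ≥ 0`) and, because `x` is interior, at some
`s < 0` (so `q ≤ 0`). Hence `q = c = 0` and the form is constant along the line. -/

open scoped Matrix Topology

theorem dotProduct_mulVec_add_smul {n R : Type*} [Fintype n] [CommRing R] (A : Matrix n n R)
    (x v : n → R) (s : R) :
    (x + s • v) ⬝ᵥ A *ᵥ (x + s • v) =
      x ⬝ᵥ A *ᵥ x + s * (x ⬝ᵥ A *ᵥ v + v ⬝ᵥ A *ᵥ x) + s ^ 2 * (v ⬝ᵥ A *ᵥ v) := by
  simp only [Matrix.mulVec_add, Matrix.mulVec_smul, add_dotProduct, dotProduct_add,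
    smul_dotProduct, dotProduct_smul, smul_eq_mul]
  ring

theorem exists_neg_forall_pos_add_mul {ι : Type*} [Finite ι] {x : ι → ℝ} (hx : ∀ i, 0 < x i)
    (v : ι → ℝ) : ∃ s < 0, ∀ i, 0 < x i + s * v i := by
  have hnear : ∀ᶠ s in 𝓝[<] (0 : ℝ), ∀ i, 0 < x i + s * v i := by
    refine nhdsWithin_le_nhds (Filter.eventually_all.2 fun i => ?_)
    have hcont : Continuous fun s : ℝ => x i + s * v i := by fun_prop
    exact hcont.tendsto' 0 (x i) (by simp) |>.eventually (lt_mem_nhds (hx i))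
  exact (hnear.and self_mem_nhdsWithin).exists.imp fun s hs => ⟨hs.2, hs.1⟩

theorem stmt9_general (d : ℕ) (A : Matrix (Fin (d + 1)) (Fin (d + 1)) ℝ)
    (x x' : Fin (d + 1) → ℝ)
    (hx1 : ∑ i, x i = 1) (hx2 : ∀ i, 0 < x i)
    (hmax : ∀ y : Fin (d + 1) → ℝ, (∑ i, y i = 1) → (∀ i, 0 ≤ y i) →
      1 / 2 * (y ⬝ᵥ A.mulVec y) ≤ 1 / 2 * (x ⬝ᵥ A.mulVec x))
    (hx'1 : ∑ i, x' i = 1) (hx'2 : ∀ i, 0 ≤ x' i)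
    (heq : 1 / 2 * (x' ⬝ᵥ A.mulVec x') = 1 / 2 * (x ⬝ᵥ A.mulVec x)) :
    ∀ t : ℝ, (∀ i, 0 ≤ (1 - t) * x i + t * x' i) →
      1 / 2 * ((fun i => (1 - t) * x i + t * x' i) ⬝ᵥ
          A.mulVec fun i => (1 - t) * x i + t * x' i) =
        1 / 2 * (x ⬝ᵥ A.mulVec x) := by
  set v := x' - x
  set c := x ⬝ᵥ A *ᵥ v + v ⬝ᵥ A *ᵥ x
  set q := v ⬝ᵥ A *ᵥ v
  have hline (s : ℝ) : (x + s • v) ⬝ᵥ A *ᵥ (x + s • v) = x ⬝ᵥ A *ᵥ x + s * c + s ^ 2 * q :=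
    dotProduct_mulVec_add_smul A x v s
  have hc : c = -q := by
    have h := hline 1
    rw [one_smul, add_sub_cancel] at h
    linarith
  have hbelow (s : ℝ) (hs : ∀ i, 0 ≤ x i + s * v i) : q * (s * (s - 1)) ≤ 0 := by
    have hsum : ∑ i, (x + s • v) i = 1 := by
      simp [v, Finset.sum_add_distrib, ← Finset.mul_sum, Finset.sum_sub_distrib, hx1, hx'1]
    have h := hmax (x + s • v) hsum (by simpa using hs)
    rw [hline, hc] at h
    nlinarith
  have hq_nonneg : 0 ≤ q := by
    have h := hbelow (1 / 2) fun i => by simp only [v, Pi.sub_apply]; linarith [hx2 i, hx'2 i]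
    nlinarith
  obtain ⟨s, hs, hpos⟩ := exists_neg_forall_pos_add_mul hx2 v
  have hq : q = 0 := by
    have h := hbelow s fun i => (hpos i).le
    nlinarith [mul_pos_of_neg_of_neg hs (by linarith : s - 1 < 0)]
  intro t _
  have hpoint : (fun i => (1 - t) * x i + t * x' i) = x + t • v := by
    funext i; simp only [v, Pi.add_apply, Pi.smul_apply, Pi.sub_apply, smul_eq_mul]; ring
  rw [hpoint, hline, hc, hq]
  ring

theorem stmt9 (d : ℕ) (A : Matrix (Fin (d + 1)) (Fin (d + 1)) ℝ) (hsymm : A.IsSymm)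
    (x x' : Fin (d + 1) → ℝ)
    (hx1 : ∑ i, x i = 1) (hx2 : ∀ i, 0 < x i)
    (hmax : ∀ y : Fin (d + 1) → ℝ, (∑ i, y i = 1) → (∀ i, 0 ≤ y i) →
      1 / 2 * (y ⬝ᵥ A.mulVec y) ≤ 1 / 2 * (x ⬝ᵥ A.mulVec x))
    (hx'1 : ∑ i, x' i = 1) (hx'2 : ∀ i, 0 ≤ x' i) (hne : x' ≠ x)
    (heq : 1 / 2 * (x' ⬝ᵥ A.mulVec x') = 1 / 2 * (x ⬝ᵥ A.mulVec x)) :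
    ∀ t : ℝ, (∀ i, 0 ≤ (1 - t) * x i + t * x' i) →
      1 / 2 * ((fun i => (1 - t) * x i + t * x' i) ⬝ᵥ
          A.mulVec fun i => (1 - t) * x i + t * x' i) =
        1 / 2 * (x ⬝ᵥ A.mulVec x) :=
  stmt9_general d A x x' hx1 hx2 hmax hx'1 hx'2 heq
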